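/- arXiv:2110.09102 — 2 statements merged into one kernel-verified Lean document; each statement's English description precedes it below -/
import Mathlib

section
/- In a k-connected graph, for any vertex s contained in some small tight set, there is a unique inclusion-minimal small tight set R_s containing s (i.e., the intersection of all small tight sets containing s is itself a small tight set containing s). -/
open Set

variable {V : Type*} [Fintype V] [DecidableEq V]

/-- The boundary (neighborhood) of a vertex set: vertices outside `A` adjacent to `A`. -/
def bdry (G : SimpleGraph V) (A : Set V) : Set V := {v | v ∉ A ∧ ∃ a ∈ A, G.Adj a v}

/-- The "node complement" `A* = V \ (A ∪ ∂A)`. -/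
def nstar (G : SimpleGraph V) (A : Set V) : Set V := (A ∪ bdry G A)ᶜ

/-- `C` is a vertex set separating `s` from `t`. -/
def IsSep (G : SimpleGraph V) (s t : V) (C : Set V) : Prop :=
  s ∉ C ∧ t ∉ C ∧ ∀ p : G.Walk s t, ∃ v ∈ C, v ∈ p.support

/-- `κ(s,t)`: minimum size of an `s`–`t` vertex cut. -/
noncomputable def kappa (G : SimpleGraph V) (s t : V) : ℕ :=
  sInf {n | ∃ C : Set V, C.ncard = n ∧ IsSep G s t C}

/-- A set is tight if `|∂A| = k` and `A* ≠ ∅`. -/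
def Tight (G : SimpleGraph V) (k : ℕ) (A : Set V) : Prop :=
  (bdry G A).ncard = k ∧ (nstar G A).Nonempty

/-- A set is small if `|A| ≤ (n - k)/2`. -/
def SmallSet (k : ℕ) (A : Set V) : Prop := 2 * A.ncard + k ≤ Fintype.card V

/-- `G` is `k`-connected. -/
def KConn (G : SimpleGraph V) (k : ℕ) : Prop :=
  k + 1 ≤ Fintype.card V ∧
    ∀ s t : V, s ≠ t → ∀ C : Set V, IsSep G s t C → k ≤ C.ncard

/-- degree of a vertex -/
noncomputable def deg (G : SimpleGraph V) (v : V) : ℕ := (G.neighborSet v).ncard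

/-- `X` is an `st`-tight set: `s ∈ X`, `t ∈ X*` and `|∂X| = κ(s,t)`. -/
def TightST (G : SimpleGraph V) (s t : V) (X : Set V) : Prop :=
  s ∈ X ∧ t ∈ nstar G X ∧ (bdry G X).ncard = kappa G s t

/-- `R_s`: intersection of all small tight sets containing `s`. -/
def Rmin (G : SimpleGraph V) (k : ℕ) (s : V) : Set V :=
  ⋂₀ {A : Set V | Tight G k A ∧ SmallSet k A ∧ s ∈ A}

/-- Two sets are laminar if disjoint or one contains the other. -/
def Laminar (X Y : Set V) : Prop := Disjoint X Y ∨ X ⊆ Y ∨ Y ⊆ X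

/-- `d`-degeneracy: every nonempty vertex subset has a vertex with at most `d`
neighbors inside it. -/
def Degenerate (G : SimpleGraph V) (d : ℕ) : Prop :=
  ∀ W : Set V, W.Nonempty → ∃ v ∈ W, (G.neighborSet v ∩ W).ncard ≤ d

/-- The set of vertices reachable from `s` avoiding `C`. -/
def Reach (G : SimpleGraph V) (C : Set V) (s : V) : Set V :=
  {v | ∃ p : G.Walk s v, ∀ u ∈ p.support, u ∉ C}

/-!
The small tight sets containing `s` are closed under intersection. For two of them, `A` and `B`,
`k`-connectivity gives `|∂(A ∩ B)| ≥ k` (as `(A ∩ B)* ⊇ A* ≠ ∅`) and `|∂(A ∪ B)| ≥ k`: either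
`(A ∪ B)*` is nonempty, or `∂(A ∪ B)` is all of `V \ (A ∪ B)`, which has at least
`n - |A| - |B| ≥ k` vertices because `A` and `B` are small. Submodularity
`|∂(A ∩ B)| + |∂(A ∪ B)| ≤ |∂A| + |∂B| = 2k` then forces `|∂(A ∩ B)| = k`. A finite nonempty
family closed under binary intersections contains its intersection.
-/

section

omit [Fintype V] [DecidableEq V]

lemma exists_mem_bdry_mem_support (G : SimpleGraph V) (X : Set V) {a b : V} (p : G.Walk a b)
    (ha : a ∈ X) (hb : b ∉ X) : ∃ v ∈ bdry G X, v ∈ p.support := by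
  induction p with
  | nil => exact absurd ha hb
  | @cons u c _ hadj _ ih =>
    by_cases hc : c ∈ X
    · obtain ⟨v, hv, hvq⟩ := ih hc hb
      exact ⟨v, hv, List.mem_cons_of_mem _ hvq⟩
    · exact ⟨c, ⟨hc, u, ha, hadj⟩, by simp⟩

lemma isSep_bdry (G : SimpleGraph V) {X : Set V} {x t : V} (hx : x ∈ X) (ht : t ∈ nstar G X) :
    IsSep G x t (bdry G X) := by
  simp only [nstar, mem_compl_iff, mem_union, not_or] at ht
  exact ⟨fun h => h.1 hx, ht.2, fun p => exists_mem_bdry_mem_support G X p hx ht.1⟩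

lemma nstar_anti (G : SimpleGraph V) : Antitone (nstar G) := by
  intro X Y hXY v hv hvX
  refine hv ?_
  by_cases hvY : v ∈ Y
  · exact Or.inl hvY
  · rcases hvX with hvX | ⟨-, a, ha, hadj⟩
    · exact Or.inl (hXY hvX)
    · exact Or.inr ⟨hvY, a, hXY ha, hadj⟩

end

section

omit [DecidableEq V]

lemma KConn.le_ncard_bdry {G : SimpleGraph V} {k : ℕ} (hG : KConn G k) {X : Set V}
    (hX : X.Nonempty) (hX' : (nstar G X).Nonempty) : k ≤ (bdry G X).ncard := by
  obtain ⟨x, hx⟩ := hX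
  obtain ⟨t, ht⟩ := hX'
  refine hG.2 x t ?_ _ (isSep_bdry G hx ht)
  rintro rfl
  exact ht (Or.inl hx)

lemma ncard_bdry_inter_add_ncard_bdry_union_le (G : SimpleGraph V) (A B : Set V) :
    (bdry G (A ∩ B)).ncard + (bdry G (A ∪ B)).ncard ≤ (bdry G A).ncard + (bdry G B).ncard := by
  have h_union : bdry G (A ∩ B) ∪ bdry G (A ∪ B) ⊆ bdry G A ∪ bdry G B := by
    rintro v (⟨hv, a, ⟨haA, haB⟩, hadj⟩ | ⟨hv, a, haA | haB, hadj⟩)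
    · by_cases hvA : v ∈ A
      · exact Or.inr ⟨fun hvB => hv ⟨hvA, hvB⟩, a, haB, hadj⟩
      · exact Or.inl ⟨hvA, a, haA, hadj⟩
    · exact Or.inl ⟨fun h => hv (Or.inl h), a, haA, hadj⟩
    · exact Or.inr ⟨fun h => hv (Or.inr h), a, haB, hadj⟩
  have h_inter : bdry G (A ∩ B) ∩ bdry G (A ∪ B) ⊆ bdry G A ∩ bdry G B := by
    rintro v ⟨⟨-, a, ⟨haA, haB⟩, hadj⟩, hv, -⟩
    exact ⟨⟨fun h => hv (Or.inl h), a, haA, hadj⟩, ⟨fun h => hv (Or.inr h), a, haB, hadj⟩⟩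
  calc (bdry G (A ∩ B)).ncard + (bdry G (A ∪ B)).ncard
      = (bdry G (A ∩ B) ∪ bdry G (A ∪ B)).ncard + (bdry G (A ∩ B) ∩ bdry G (A ∪ B)).ncard :=
        (ncard_union_add_ncard_inter _ _ (toFinite _) (toFinite _)).symm
    _ ≤ (bdry G A ∪ bdry G B).ncard + (bdry G A ∩ bdry G B).ncard :=
        add_le_add (ncard_le_ncard h_union) (ncard_le_ncard h_inter)
    _ = (bdry G A).ncard + (bdry G B).ncard :=
        ncard_union_add_ncard_inter _ _ (toFinite _) (toFinite _)

lemma KConn.le_ncard_bdry_union {G : SimpleGraph V} {k : ℕ} (hG : KConn G k) {A B : Set V}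
    (hA : A.Nonempty) (hA_small : SmallSet k A) (hB_small : SmallSet k B) :
    k ≤ (bdry G (A ∪ B)).ncard := by
  rcases (nstar G (A ∪ B)).eq_empty_or_nonempty with h_empty | h_ne
  · have h_compl : (A ∪ B)ᶜ ⊆ bdry G (A ∪ B) := by
      intro v hv
      by_contra hvb
      exact h_empty.subset (show v ∈ nstar G (A ∪ B) from fun h => h.elim hv hvb)
    have h_card : (A ∪ B).ncard + (A ∪ B)ᶜ.ncard = Fintype.card V := by
      rw [ncard_add_ncard_compl, Nat.card_eq_fintype_card]
    have h_union := ncard_union_le A B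
    have h_bdry := ncard_le_ncard h_compl
    unfold SmallSet at hA_small hB_small
    omega
  · exact hG.le_ncard_bdry (hA.mono subset_union_left) h_ne

lemma KConn.infClosed_smallTightSets {G : SimpleGraph V} {k : ℕ} (hG : KConn G k) (s : V) :
    InfClosed {A : Set V | Tight G k A ∧ SmallSet k A ∧ s ∈ A} := by
  rintro A ⟨⟨hA_bdry, hA_star⟩, hA_small, hsA⟩ B ⟨⟨hB_bdry, -⟩, hB_small, hsB⟩
  show Tight G k (A ∩ B) ∧ SmallSet k (A ∩ B) ∧ s ∈ A ∩ B
  have h_star : (nstar G (A ∩ B)).Nonempty := hA_star.mono (nstar_anti G inter_subset_left)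
  have h_inter : k ≤ (bdry G (A ∩ B)).ncard := hG.le_ncard_bdry ⟨s, hsA, hsB⟩ h_star
  have h_union := hG.le_ncard_bdry_union ⟨s, hsA⟩ hA_small hB_small
  have h_submod := ncard_bdry_inter_add_ncard_bdry_union_le G A B
  have h_card : (A ∩ B).ncard ≤ A.ncard := ncard_le_ncard inter_subset_left
  refine ⟨⟨by omega, h_star⟩, ?_, hsA, hsB⟩
  unfold SmallSet at hA_small ⊢
  omega

end

theorem stmt2 (G : SimpleGraph V) (k : ℕ) (s : V) (hG : KConn G k)
    (hs : ∃ A : Set V, Tight G k A ∧ SmallSet k A ∧ s ∈ A) :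
    Tight G k (Rmin G k s) ∧ SmallSet k (Rmin G k s) ∧ s ∈ Rmin G k s :=
  (hG.infClosed_smallTightSets s).sInf_mem_of_nonempty (toFinite _) hs subset_rfl
end

section
/- Let G be a graph and s a vertex. Let A be an sa-tight set and B an sb-tight set with κ(s,a) ≥ κ(s,b), where a ∈ A* and b ∈ B*. If a ∈ A* ∩ B*, then κ(s,a) = κ(s,b), A ∩ B and A ∪ B are both sa-tight, and A ∩ B is sb-tight. -/
open Set

variable {V : Type*} [Fintype V] [DecidableEq V]

lemma walk_hits_bdry (G : SimpleGraph V) (X : Set V) :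
    ∀ {u t : V} (p : G.Walk u t), u ∈ X → t ∉ X → ∃ v ∈ p.support, v ∈ bdry G X := by
  intro u t p
  induction p with
  | nil => intro hu ht; exact absurd hu ht
  | @cons u w t h q ih =>
    intro hu ht
    by_cases hw : w ∈ X
    · obtain ⟨v, hv, hvb⟩ := ih hw ht
      exact ⟨v, by simp [hv], hvb⟩
    · exact ⟨w, by simp, hw, u, hu, h⟩

lemma sep_of_bdry (G : SimpleGraph V) (X : Set V) {s t : V}
    (hs : s ∈ X) (ht : t ∈ nstar G X) : IsSep G s t (bdry G X) := by
  have htX : t ∉ X ∧ t ∉ bdry G X := by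
    simpa [nstar, not_or] using ht
  refine ⟨fun h => h.1 hs, htX.2, fun p => ?_⟩
  obtain ⟨v, hv, hvb⟩ := walk_hits_bdry G X p hs htX.1
  exact ⟨v, hvb, hv⟩

lemma kappa_le_bdry (G : SimpleGraph V) {s t : V} (X : Set V)
    (hs : s ∈ X) (ht : t ∈ nstar G X) : kappa G s t ≤ (bdry G X).ncard :=
  Nat.sInf_le ⟨bdry G X, rfl, sep_of_bdry G X hs ht⟩

theorem stmt9 (G : SimpleGraph V) (s a b : V)
    (hsa : ¬ G.Adj s a) (hsb : ¬ G.Adj s b) (hna : s ≠ a) (hnb : s ≠ b)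
    (A B : Set V) (hA : TightST G s a A) (hB : TightST G s b B)
    (hk : kappa G s b ≤ kappa G s a) (hmem : a ∈ nstar G A ∩ nstar G B) :
    kappa G s a = kappa G s b ∧ TightST G s a (A ∩ B) ∧ TightST G s a (A ∪ B) ∧
      TightST G s b (A ∩ B) := by
  obtain ⟨hsA, haA, hcA⟩ := hA
  obtain ⟨hsB, hbB, hcB⟩ := hB
  obtain ⟨haA', haB⟩ := hmem
  have haAn : a ∉ A ∧ a ∉ bdry G A := by simpa [nstar, not_or] using haA
  have haBn : a ∉ B ∧ a ∉ bdry G B := by simpa [nstar, not_or] using haB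
  have hbBn : b ∉ B ∧ b ∉ bdry G B := by simpa [nstar, not_or] using hbB
  -- boundary inclusions
  have h1 : bdry G (A ∩ B) ⊆ bdry G A ∪ bdry G B := by
    rintro v ⟨hv, u, ⟨huA, huB⟩, hadj⟩
    by_cases hvA : v ∈ A
    · exact Or.inr ⟨fun hvB => hv ⟨hvA, hvB⟩, u, huB, hadj⟩
    · exact Or.inl ⟨hvA, u, huA, hadj⟩
  have h2 : bdry G (A ∪ B) ⊆ bdry G A ∪ bdry G B := by
    rintro v ⟨hv, u, hu, hadj⟩
    rcases hu with huA | huB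
    · exact Or.inl ⟨fun h => hv (Or.inl h), u, huA, hadj⟩
    · exact Or.inr ⟨fun h => hv (Or.inr h), u, huB, hadj⟩
  have h3 : bdry G (A ∩ B) ∩ bdry G (A ∪ B) ⊆ bdry G A ∩ bdry G B := by
    rintro v ⟨⟨_, u, ⟨huA, huB⟩, hadj⟩, hv2, _⟩
    exact ⟨⟨fun h => hv2 (Or.inl h), u, huA, hadj⟩,
           ⟨fun h => hv2 (Or.inr h), u, huB, hadj⟩⟩
  -- nstar memberships
  have haI : a ∈ nstar G (A ∩ B) := by
    simp only [nstar, mem_compl_iff, mem_union, not_or]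
    exact ⟨fun h => haAn.1 h.1, fun h => (h1 h).elim haAn.2 haBn.2⟩
  have haU : a ∈ nstar G (A ∪ B) := by
    simp only [nstar, mem_compl_iff, mem_union, not_or]
    exact ⟨⟨haAn.1, haBn.1⟩, fun h => (h2 h).elim haAn.2 haBn.2⟩
  have hbI : b ∈ nstar G (A ∩ B) := by
    simp only [nstar, mem_compl_iff, mem_union, not_or]
    refine ⟨fun h => hbBn.1 h.2, fun h => ?_⟩
    obtain ⟨hv, u, ⟨_, huB⟩, hadj⟩ := h
    by_cases hbBm : b ∈ B
    · exact hbBn.1 hbBm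
    · exact hbBn.2 ⟨hbBm, u, huB, hadj⟩
  -- kappa bounds
  have k1 : kappa G s a ≤ (bdry G (A ∩ B)).ncard :=
    kappa_le_bdry G (A ∩ B) ⟨hsA, hsB⟩ haI
  have k2 : kappa G s a ≤ (bdry G (A ∪ B)).ncard :=
    kappa_le_bdry G (A ∪ B) (Or.inl hsA) haU
  have k3 : kappa G s b ≤ (bdry G (A ∩ B)).ncard :=
    kappa_le_bdry G (A ∩ B) ⟨hsA, hsB⟩ hbI
  -- submodularity
  have submod : (bdry G (A ∩ B)).ncard + (bdry G (A ∪ B)).ncard ≤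
      (bdry G A).ncard + (bdry G B).ncard := by
    rw [← Set.ncard_union_add_ncard_inter (bdry G (A ∩ B)) (bdry G (A ∪ B)),
        ← Set.ncard_union_add_ncard_inter (bdry G A) (bdry G B)]
    have hu : bdry G (A ∩ B) ∪ bdry G (A ∪ B) ⊆ bdry G A ∪ bdry G B :=
      union_subset h1 h2
    exact Nat.add_le_add (Set.ncard_le_ncard hu (Set.toFinite _))
      (Set.ncard_le_ncard h3 (Set.toFinite _))
  rw [hcA, hcB] at submod
  have e1 : (bdry G (A ∩ B)).ncard = kappa G s a := by omega
  have e2 : (bdry G (A ∪ B)).ncard = kappa G s a := by omega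
  have ekk : kappa G s a = kappa G s b := by omega
  exact ⟨ekk, ⟨⟨hsA, hsB⟩, haI, e1⟩, ⟨Or.inl hsA, haU, e2⟩,
    ⟨⟨hsA, hsB⟩, hbI, e1.trans ekk⟩⟩
end
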